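/- Let τ1, τ2, τ3, τ4 > 0 and α_min, β_min, γ_min > 0 with α_min + β_min + γ_min < 1. With z_λ = max{(2τ1/λ)^{1/3}, α_min} + max{β_λ, β_min} + max{(2τ4/λ)^{1/3}, γ_min} (where β_λ is the unique zero on (0,∞) of g_λ(β) = τ2·2^{τ3/β}·(1 − τ3·ln 2/β) − τ2 + λ), the map λ ↦ z_λ is continuous on (0, ∞), z_λ → ∞ as λ → 0⁺, and z_λ → α_min + β_min + γ_min as λ → ∞. Consequently there exists λ* > 0 with z_{λ*} = 1. -/

import Mathlib

/-!
With `c = τ3 log 2` one has `g_λ(β) = τ2 (φ(c/β) - 1) + λ`, where `φ u = eᵘ (1 - u)` is strictly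
decreasing on `[0, ∞)` with `φ 0 = 1`. Hence `φ(c/β_λ) = 1 - λ/τ2`, so `λ ↦ β_λ` is a strictly
decreasing bijection of `(0, ∞)` onto itself; in particular it is continuous and tends to `0` at
infinity. The cube-root terms blow up at `0⁺` and vanish at infinity, so `z_λ` is eventually equal
to `α_min + β_min + γ_min < 1`, and the intermediate value theorem produces `z_{λ*} = 1`.
-/

open Filter Set Real Topology

theorem strictAntiOn_exp_mul_one_sub : StrictAntiOn (fun u : ℝ => exp u * (1 - u)) (Ici 0) := by
  refine strictAntiOn_of_deriv_neg (convex_Ici 0) (by fun_prop) fun x hx => ?_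
  rw [interior_Ici] at hx
  have hderiv : HasDerivAt (fun u : ℝ => exp u * (1 - u)) (-(x * exp x)) x :=
    ((hasDerivAt_exp x).mul ((hasDerivAt_id' x).const_sub 1)).congr_deriv (by ring)
  rw [hderiv.deriv, neg_lt_zero]
  exact mul_pos hx (exp_pos x)

theorem exp_mul_one_sub_lt_one {u : ℝ} (hu : 0 < u) : exp u * (1 - u) < 1 := by
  simpa using strictAntiOn_exp_mul_one_sub self_mem_Ici hu.le hu

theorem exp_mul_one_sub_eq_of_two_rpow {τ t x l : ℝ} (hτ : τ ≠ 0)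
    (h : τ * (2 : ℝ) ^ (t / x) * (1 - t * log 2 / x) - τ + l = 0) :
    exp (t * log 2 / x) * (1 - t * log 2 / x) = 1 - l / τ := by
  rw [rpow_def_of_pos two_pos, mul_div_assoc', mul_comm (log 2) t, mul_assoc] at h
  generalize exp (t * log 2 / x) * (1 - t * log 2 / x) = φ at h ⊢
  field_simp
  linarith

section RootFamily

variable {c τ : ℝ} {β : ℝ → ℝ}
  (hβ : ∀ l, 0 < l → 0 < β l ∧ exp (c / β l) * (1 - c / β l) = 1 - l / τ)
include hβ

theorem rootFamily_strictAntiOn (hc : 0 < c) (hτ : 0 < τ) : StrictAntiOn β (Ioi 0) := by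
  intro l₁ hl₁ l₂ hl₂ hlt
  obtain ⟨hβ₁, heq₁⟩ := hβ l₁ hl₁
  obtain ⟨hβ₂, heq₂⟩ := hβ l₂ hl₂
  have hφ : exp (c / β l₂) * (1 - c / β l₂) < exp (c / β l₁) * (1 - c / β l₁) := by
    rw [heq₁, heq₂]
    linarith [div_lt_div_of_pos_right hlt hτ]
  have hdiv : c / β l₁ < c / β l₂ :=
    (strictAntiOn_exp_mul_one_sub.lt_iff_gt (mem_Ici.2 (by positivity))
      (mem_Ici.2 (by positivity))).1 hφ
  exact (div_lt_div_iff_of_pos_left hc hβ₁ hβ₂).1 hdiv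

theorem rootFamily_image_Ioi (hc : 0 < c) (hτ : 0 < τ) : β '' Ioi 0 = Ioi 0 := by
  refine Subset.antisymm (fun _ ⟨l, hl, hb⟩ => hb ▸ (hβ l hl).1) fun b (hb : 0 < b) => ?_
  have hlt : exp (c / b) * (1 - c / b) < 1 := exp_mul_one_sub_lt_one (by positivity)
  -- the parameter at which `b` solves the defining equation
  set l := τ * (1 - exp (c / b) * (1 - c / b))
  have hl : 0 < l := mul_pos hτ (by linarith)
  obtain ⟨hβl, heq⟩ := hβ l hl
  have hφ : exp (c / β l) * (1 - c / β l) = exp (c / b) * (1 - c / b) := by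
    rw [heq, mul_div_cancel_left₀ _ hτ.ne', sub_sub_cancel]
  have hdiv : c / β l = c / b :=
    strictAntiOn_exp_mul_one_sub.injOn (mem_Ici.2 (by positivity)) (mem_Ici.2 (by positivity)) hφ
  exact ⟨l, hl, by simpa [div_div_cancel₀ hc.ne'] using congrArg (c / ·) hdiv⟩

theorem rootFamily_continuousOn (hc : 0 < c) (hτ : 0 < τ) : ContinuousOn β (Ioi 0) := by
  intro l hl
  refine ContinuousAt.continuousWithinAt ?_
  refine continuousAt_of_monotoneOn_of_image_mem_nhds (β := ℝᵒᵈ)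
    (rootFamily_strictAntiOn hβ hc hτ).antitoneOn (isOpen_Ioi.mem_nhds hl) ?_
  show β '' Ioi 0 ∈ 𝓝 (β l)
  rw [rootFamily_image_Ioi hβ hc hτ]
  exact isOpen_Ioi.mem_nhds (hβ l hl).1

theorem rootFamily_eventually_le_atTop (hc : 0 < c) (hτ : 0 < τ) {b : ℝ} (hb : 0 < b) :
    ∀ᶠ l in atTop, β l ≤ b := by
  obtain ⟨l₀, hl₀, rfl⟩ : b ∈ β '' Ioi 0 := by rwa [rootFamily_image_Ioi hβ hc hτ]
  filter_upwards [eventually_ge_atTop l₀] with l hl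
  exact (rootFamily_strictAntiOn hβ hc hτ).antitoneOn hl₀ (lt_of_lt_of_le hl₀ hl) hl

end RootFamily

theorem continuousOn_const_div_rpow (a : ℝ) {p : ℝ} (hp : 0 ≤ p) :
    ContinuousOn (fun x : ℝ => (a / x) ^ p) (Ioi 0) :=
  (continuousOn_const.div continuousOn_id fun _ hx => ne_of_gt hx).rpow_const fun _ _ => .inr hp

theorem tendsto_const_div_rpow_nhdsGT_zero {a p : ℝ} (ha : 0 < a) (hp : 0 < p) :
    Tendsto (fun x : ℝ => (a / x) ^ p) (𝓝[>] 0) atTop :=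
  (tendsto_rpow_atTop hp).comp <|
    (tendsto_inv_nhdsGT_zero.const_mul_atTop ha).congr fun x => (div_eq_mul_inv a x).symm

theorem tendsto_const_div_rpow_atTop (a : ℝ) {p : ℝ} (hp : 0 < p) :
    Tendsto (fun x : ℝ => (a / x) ^ p) atTop (𝓝 0) := by
  have := (continuousAt_rpow_const 0 p (.inr hp.le)).tendsto.comp (tendsto_id.const_div_atTop a)
  rwa [zero_rpow hp.ne'] at this

theorem exists_eq_of_tendsto_nhdsGT_zero_of_tendsto_atTop {f : ℝ → ℝ} (hf : ContinuousOn f (Ioi 0))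
    (h₀ : Tendsto f (𝓝[>] 0) atTop) {L y : ℝ} (hL : Tendsto f atTop (𝓝 L)) (hy : L < y) :
    ∃ x, 0 < x ∧ f x = y := by
  obtain ⟨a, hya, ha⟩ := ((h₀.eventually_ge_atTop y).and self_mem_nhdsWithin).exists
  obtain ⟨b, hby, hab⟩ := ((hL.eventually_lt_const hy).and (eventually_gt_atTop a)).exists
  obtain ⟨x, hx, hfx⟩ := intermediate_value_Icc' hab.le
    (hf.mono fun x hx => lt_of_lt_of_le ha hx.1) ⟨hby.le, hya⟩
  exact ⟨x, lt_of_lt_of_le ha hx.1, hfx⟩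

theorem fast_exists_multiplier_general
    (τ1 τ2 τ3 τ4 αmin βmin γmin : ℝ)
    (h1 : 0 < τ1) (h2 : 0 < τ2) (h3 : 0 < τ3)
    (hαmin : 0 < αmin) (hβmin : 0 < βmin) (hγmin : 0 < γmin)
    (hsum : αmin + βmin + γmin < 1)
    (βof : ℝ → ℝ)
    (hβof : ∀ lam : ℝ, 0 < lam → 0 < βof lam ∧
      τ2 * (2 : ℝ) ^ (τ3 / βof lam) * (1 - τ3 * Real.log 2 / βof lam) - τ2 + lam
        = 0)
    (z : ℝ → ℝ)
    (hz : ∀ lam : ℝ, z lam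
      = max ((2 * τ1 / lam) ^ ((1 : ℝ) / 3)) αmin + max (βof lam) βmin +
          max ((2 * τ4 / lam) ^ ((1 : ℝ) / 3)) γmin) :
    ContinuousOn z (Set.Ioi (0 : ℝ)) ∧
    Filter.Tendsto z (nhdsWithin 0 (Set.Ioi (0 : ℝ))) Filter.atTop ∧
    Filter.Tendsto z Filter.atTop (nhds (αmin + βmin + γmin)) ∧
    ∃ lam : ℝ, 0 < lam ∧ z lam = 1 := by
  have hc : 0 < τ3 * log 2 := mul_pos h3 (log_pos one_lt_two)
  have hβ (l : ℝ) (hl : 0 < l) : 0 < βof l ∧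
      exp (τ3 * log 2 / βof l) * (1 - τ3 * log 2 / βof l) = 1 - l / τ2 :=
    ⟨(hβof l hl).1, exp_mul_one_sub_eq_of_two_rpow h2.ne' (hβof l hl).2⟩
  have hcont : ContinuousOn z (Ioi 0) := by
    refine ContinuousOn.congr ?_ fun l _ => hz l
    have hcube (t : ℝ) : ContinuousOn (fun l : ℝ => (2 * t / l) ^ ((1 : ℝ) / 3)) (Ioi 0) :=
      continuousOn_const_div_rpow (2 * t) (by norm_num)
    exact (((hcube τ1).sup continuousOn_const).add
      ((rootFamily_continuousOn hβ hc h2).sup continuousOn_const)).add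
      ((hcube τ4).sup continuousOn_const)
  have hzero : Tendsto z (𝓝[>] 0) atTop := by
    refine tendsto_atTop_mono (fun l => ?_)
      (tendsto_const_div_rpow_nhdsGT_zero (by positivity : 0 < 2 * τ1) (p := 1 / 3) (by norm_num))
    rw [hz]
    linarith [le_max_left ((2 * τ1 / l) ^ ((1 : ℝ) / 3)) αmin, le_max_right (βof l) βmin,
      le_max_right ((2 * τ4 / l) ^ ((1 : ℝ) / 3)) γmin]
  have htop : Tendsto z atTop (𝓝 (αmin + βmin + γmin)) := by
    have hcube (t : ℝ) : Tendsto (fun l : ℝ => (2 * t / l) ^ ((1 : ℝ) / 3)) atTop (𝓝 0) :=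
      tendsto_const_div_rpow_atTop (2 * t) (by norm_num)
    refine tendsto_const_nhds.congr' ?_
    filter_upwards [(hcube τ1).eventually_le_const hαmin, (hcube τ4).eventually_le_const hγmin,
      rootFamily_eventually_le_atTop hβ hc h2 hβmin] with l hα hγ hβl
    rw [hz, max_eq_right hα, max_eq_right hβl, max_eq_right hγ]
  exact ⟨hcont, hzero, htop,
    exists_eq_of_tendsto_nhdsGT_zero_of_tendsto_atTop hcont hzero htop hsum⟩

/-- The map `λ ↦ z_λ`, where
`z_λ = max{(2τ1/λ)^{1/3}, α_min} + max{β_λ, β_min} + max{(2τ4/λ)^{1/3}, γ_min}`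
and `β_λ` is the unique positive zero of `g_λ`, is continuous on `(0,∞)`, tends
to `∞` as `λ → 0⁺` and to `α_min + β_min + γ_min < 1` as `λ → ∞`; consequently
some `λ* > 0` satisfies `z_{λ*} = 1`. -/
theorem fast_exists_multiplier
    (τ1 τ2 τ3 τ4 αmin βmin γmin : ℝ)
    (h1 : 0 < τ1) (h2 : 0 < τ2) (h3 : 0 < τ3) (h4 : 0 < τ4)
    (hαmin : 0 < αmin) (hβmin : 0 < βmin) (hγmin : 0 < γmin)
    (hsum : αmin + βmin + γmin < 1)
    (βof : ℝ → ℝ)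
    (hβof : ∀ lam : ℝ, 0 < lam → 0 < βof lam ∧
      τ2 * (2 : ℝ) ^ (τ3 / βof lam) * (1 - τ3 * Real.log 2 / βof lam) - τ2 + lam
        = 0)
    (z : ℝ → ℝ)
    (hz : ∀ lam : ℝ, z lam
      = max ((2 * τ1 / lam) ^ ((1 : ℝ) / 3)) αmin + max (βof lam) βmin +
          max ((2 * τ4 / lam) ^ ((1 : ℝ) / 3)) γmin) :
    ContinuousOn z (Set.Ioi (0 : ℝ)) ∧
    Filter.Tendsto z (nhdsWithin 0 (Set.Ioi (0 : ℝ))) Filter.atTop ∧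
    Filter.Tendsto z Filter.atTop (nhds (αmin + βmin + γmin)) ∧
    ∃ lam : ℝ, 0 < lam ∧ z lam = 1 :=
  fast_exists_multiplier_general τ1 τ2 τ3 τ4 αmin βmin γmin h1 h2 h3 hαmin hβmin hγmin hsum βof hβof
    z hz
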